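/- arXiv:2301.07812 — 2 statements merged into one kernel-verified Lean document; each statement's English description precedes it below -/
import Mathlib

section
/- Let σ be a real symmetric traceless n×n matrix (n ≥ 2). Then trace(σ⁴) ≤ (((n-1)³ + 1)/(n²(n-1))) · (trace(σ²))². -/
/-!
Diagonalising `σ` reduces the claim to real numbers `x₁, …, xₙ` with `∑ xᵢ = 0`. For `i ≠ j`,
Cauchy–Schwarz on the remaining `n - 2` coordinates, whose sum is `-(xᵢ + xⱼ)`, gives
`(xᵢ + xⱼ)² ≤ (n - 2) (∑ₖ xₖ² - xᵢ² - xⱼ²)`, hence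
`(xᵢ² - xⱼ²)² ≤ (n - 2) (xᵢ - xⱼ)² (∑ₖ xₖ² - xᵢ² - xⱼ²)`.
Summing over all pairs `(i, j)` turns both sides into polynomials in `∑ xᵢ²` and `∑ xᵢ⁴`,
and the resulting linear inequality is `n (n - 1) ∑ xᵢ⁴ ≤ (n² - 3n + 3) (∑ xᵢ²)²`.
-/

open Finset

theorem Matrix.IsHermitian.trace_pow_eq_sum_eigenvalues_pow {n 𝕜 : Type*} [Fintype n]
    [DecidableEq n] [RCLike 𝕜] {A : Matrix n n 𝕜} (hA : A.IsHermitian) (k : ℕ) :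
    (A ^ k).trace = ∑ i, (hA.eigenvalues i : 𝕜) ^ k := by
  conv_lhs => rw [hA.spectral_theorem]
  rw [← map_pow, Matrix.diagonal_pow, Unitary.conjStarAlgAut_apply, Matrix.trace_mul_cycle,
    Unitary.coe_star_mul_self, one_mul, Matrix.trace_diagonal]
  rfl

section SumZero

variable {ι : Type*} [Fintype ι] (x : ι → ℝ)

theorem sum_sum_sq_sub_sq_sq :
    ∑ i, ∑ j, (x i ^ 2 - x j ^ 2) ^ 2 =
      2 * Fintype.card ι * ∑ i, x i ^ 4 - 2 * (∑ i, x i ^ 2) ^ 2 := by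
  have h (i j : ι) : (x i ^ 2 - x j ^ 2) ^ 2 = x i ^ 4 - 2 * x i ^ 2 * x j ^ 2 + x j ^ 4 := by
    ring
  simp only [h, sum_add_distrib, sum_sub_distrib, ← mul_sum, ← sum_mul, sum_const, card_univ,
    nsmul_eq_mul]
  ring

variable {x}

theorem sum_sum_sub_sq_mul_of_sum_eq_zero (hx : ∑ k, x k = 0) :
    ∑ i, ∑ j, (x i - x j) ^ 2 * (∑ k, x k ^ 2 - x i ^ 2 - x j ^ 2) =
      2 * (Fintype.card ι - 1) * (∑ i, x i ^ 2) ^ 2 - 2 * Fintype.card ι * ∑ i, x i ^ 4 := by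
  set s := ∑ k, x k ^ 2 with hs
  have h (i j : ι) : (x i - x j) ^ 2 * (s - x i ^ 2 - x j ^ 2) =
      s * x i ^ 2 + s * x j ^ 2 - 2 * s * x i * x j - x i ^ 4 - 2 * x i ^ 2 * x j ^ 2 - x j ^ 4
        + 2 * x i ^ 3 * x j + 2 * x i * x j ^ 3 := by
    ring
  simp only [h, sum_add_distrib, sum_sub_distrib, ← mul_sum, ← sum_mul, sum_const, card_univ,
    nsmul_eq_mul, hx, ← hs]
  ring

theorem sq_add_le_of_sum_eq_zero [DecidableEq ι] (hx : ∑ k, x k = 0) {i j : ι} (hij : i ≠ j) :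
    (x i + x j) ^ 2 ≤ (Fintype.card ι - 2 : ℝ) * (∑ k, x k ^ 2 - x i ^ 2 - x j ^ 2) := by
  set T := (univ.erase i).erase j
  have hj : j ∈ univ.erase i := mem_erase.2 ⟨hij.symm, mem_univ j⟩
  have sum_eq (f : ι → ℝ) : ∑ k, f k = f i + f j + ∑ k ∈ T, f k := by
    rw [← add_sum_erase _ _ (mem_univ i), ← add_sum_erase _ _ hj, add_assoc]
  have card_T : (#T : ℝ) = Fintype.card ι - 2 := by
    rw [cast_card_erase_of_mem hj, cast_card_erase_of_mem (mem_univ i), card_univ]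
    ring
  have sum_T : x i + x j = -∑ k ∈ T, x k := by linarith [sum_eq x]
  calc (x i + x j) ^ 2 = (∑ k ∈ T, x k) ^ 2 := by rw [sum_T, neg_sq]
    _ ≤ #T * ∑ k ∈ T, x k ^ 2 := sq_sum_le_card_mul_sum_sq
    _ = _ := by rw [card_T, sum_eq (x · ^ 2)]; ring

theorem sq_sub_sq_sq_le_of_sum_eq_zero (hx : ∑ k, x k = 0) (i j : ι) :
    (x i ^ 2 - x j ^ 2) ^ 2 ≤
      (Fintype.card ι - 2 : ℝ) * ((x i - x j) ^ 2 * (∑ k, x k ^ 2 - x i ^ 2 - x j ^ 2)) := by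
  classical
  rcases eq_or_ne i j with rfl | hij
  · simp
  calc (x i ^ 2 - x j ^ 2) ^ 2 = (x i - x j) ^ 2 * (x i + x j) ^ 2 := by ring
    _ ≤ (x i - x j) ^ 2 * ((Fintype.card ι - 2) * (∑ k, x k ^ 2 - x i ^ 2 - x j ^ 2)) := by
      gcongr
      exact sq_add_le_of_sum_eq_zero hx hij
    _ = _ := by ring

theorem card_mul_card_sub_one_mul_sum_pow_four_le (hx : ∑ k, x k = 0) :
    Fintype.card ι * (Fintype.card ι - 1) * ∑ i, x i ^ 4 ≤
      (Fintype.card ι ^ 2 - 3 * Fintype.card ι + 3 : ℝ) * (∑ i, x i ^ 2) ^ 2 := by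
  have key := sum_le_sum fun i (_ : i ∈ univ) ↦ sum_le_sum fun j (_ : j ∈ univ) ↦
    sq_sub_sq_sq_le_of_sum_eq_zero hx i j
  simp only [← mul_sum, sum_sum_sq_sub_sq_sq, sum_sum_sub_sq_mul_of_sum_eq_zero hx] at key
  linarith

end SumZero

theorem trace_fourth_le_of_traceless (n : ℕ) (hn : 2 ≤ n)
    (σ : Matrix (Fin n) (Fin n) ℝ) (hσ : σ.IsSymm) (htr : σ.trace = 0) :
    (σ * σ * σ * σ).trace ≤
      (((n : ℝ) - 1) ^ 3 + 1) / ((n : ℝ) ^ 2 * ((n : ℝ) - 1)) * ((σ * σ).trace) ^ 2 := by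
  have hA : σ.IsHermitian := Matrix.isHermitian_iff_isSymm.2 hσ
  have trace_pow (k : ℕ) : (σ ^ k).trace = ∑ i, hA.eigenvalues i ^ k :=
    hA.trace_pow_eq_sum_eigenvalues_pow k
  have sum_eigenvalues : ∑ i, hA.eigenvalues i = 0 := by
    simpa [hA.trace_eq_sum_eigenvalues] using htr
  have key := card_mul_card_sub_one_mul_sum_pow_four_le sum_eigenvalues
  rw [Fintype.card_fin] at key
  rw [show σ * σ * σ * σ = σ ^ 4 by simp only [pow_succ, pow_zero, one_mul], ← sq,
    trace_pow, trace_pow]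
  have hn₁ : (1 : ℝ) < n := by exact_mod_cast hn
  rw [div_mul_eq_mul_div, le_div_iff₀ (by positivity)]
  calc (∑ i, hA.eigenvalues i ^ 4) * ((n : ℝ) ^ 2 * (n - 1))
      = n * (n * (n - 1) * ∑ i, hA.eigenvalues i ^ 4) := by ring
    _ ≤ n * ((n ^ 2 - 3 * n + 3) * (∑ i, hA.eigenvalues i ^ 2) ^ 2) := by gcongr
    _ = ((n - 1) ^ 3 + 1) * (∑ i, hA.eigenvalues i ^ 2) ^ 2 := by ring
end

section
/- Under the hypotheses of the multiplicative shuffling lemma (j₁, j₂, j_av solving Jacobi equations with curvature schedules κ₁, κ₂, (κ₁+κ₂)/2 respectively, initial conditions j(0)=0, j'(0)=1, and all positive on (0,T]), the inequality j_av(t)² ≥ j₁(t)·j₂(t) holds for all t ∈ [0,T]. -/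
/-!
Write `P = j₁ j₂` and `N = 2 P j' - j P'`, so that `N = 2 j P (j'/j - (j₁'/j₁ + j₂'/j₂)/2)` measures
the gap between the logarithmic derivatives of `j` and `√P`. Because `j` carries the averaged
curvature, the curvature terms cancel in `N'`, and `2 P N' - N P' = j (j₁' j₂ - j₁ j₂')² ≥ 0`.
Hence `N / √P` is nondecreasing on `(0, T]`, and it tends to `0` at `0⁺`, so `N ≥ 0`. But `N ≥ 0`
says in turn that `j / √P` is nondecreasing, and it tends to `1` at `0⁺`, so `j ≥ √P`.
-/

open Filter Set Topology

theorem le_of_tendsto_nhdsGT_of_hasDerivAt_nonneg {f f' : ℝ → ℝ} {a b L : ℝ}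
    (hf : ∀ t ∈ Ioc a b, HasDerivAt f (f' t) t) (hf' : ∀ t ∈ Ioo a b, 0 ≤ f' t)
    (hL : Tendsto f (𝓝[>] a) (𝓝 L)) : ∀ t ∈ Ioc a b, L ≤ f t := by
  have hmono : MonotoneOn f (Ioc a b) :=
    monotoneOn_of_hasDerivWithinAt_nonneg (convex_Ioc a b)
      (fun t ht => (hf t ht).continuousAt.continuousWithinAt)
      (fun t ht => (hf t (interior_subset ht)).hasDerivWithinAt)
      (fun t ht => hf' t (by rwa [interior_Ioc] at ht))
  intro t ht
  refine le_of_tendsto hL ?_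
  filter_upwards [Ioc_mem_nhdsGT ht.1] with s hs
  exact hmono ⟨hs.1, hs.2.trans ht.2⟩ ht hs.2

theorem tendsto_div_self_nhdsGT_zero {f : ℝ → ℝ} {c : ℝ} (hf : HasDerivAt f c 0) (h0 : f 0 = 0) :
    Tendsto (fun s => f s / s) (𝓝[>] 0) (𝓝 c) := by
  simpa [h0, div_eq_inv_mul] using hf.tendsto_slope_zero_right

theorem HasDerivAt.div_sqrt {f g : ℝ → ℝ} {f' g' t : ℝ} (hf : HasDerivAt f f' t)
    (hg : HasDerivAt g g' t) (hgt : 0 < g t) :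
    HasDerivAt (fun s => f s / √(g s)) ((2 * g t * f' - f t * g') / (2 * g t * √(g t))) t := by
  have hsqrt : 0 < √(g t) := Real.sqrt_pos.mpr hgt
  refine (hf.div (hg.sqrt hgt.ne') hsqrt.ne').congr_deriv ?_
  field_simp
  rw [Real.sq_sqrt hgt.le]
  ring

/-- The hypothesis `hfg` says that `f / √g` is nondecreasing. -/
theorem mul_sqrt_le_of_tendsto {f f' g g' : ℝ → ℝ} {T c : ℝ}
    (hf : ∀ t ∈ Ioc 0 T, HasDerivAt f (f' t) t) (hg : ∀ t ∈ Ioc 0 T, HasDerivAt g (g' t) t)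
    (hg_pos : ∀ t ∈ Ioc 0 T, 0 < g t) (hfg : ∀ t ∈ Ioo 0 T, f t * g' t ≤ 2 * g t * f' t)
    (hf0 : Tendsto (fun s => f s / s) (𝓝[>] 0) (𝓝 c))
    (hg0 : Tendsto (fun s => g s / s ^ 2) (𝓝[>] 0) (𝓝 1)) :
    ∀ t ∈ Ioc 0 T, c * √(g t) ≤ f t := by
  have hlim : Tendsto (fun s => f s / √(g s)) (𝓝[>] 0) (𝓝 c) := by
    have h := hf0.div hg0.sqrt (by norm_num)
    rw [Real.sqrt_one, div_one] at h
    refine h.congr' ?_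
    filter_upwards [self_mem_nhdsWithin] with s (hs : 0 < s)
    rw [Pi.div_apply, Real.sqrt_div' _ (sq_nonneg s), Real.sqrt_sq hs.le,
      div_div_div_cancel_right₀ hs.ne']
  intro t ht
  have h := le_of_tendsto_nhdsGT_of_hasDerivAt_nonneg
    (fun t ht => (hf t ht).div_sqrt (hg t ht) (hg_pos t ht))
    (fun t ht => by
      have hgt := hg_pos t (Ioo_subset_Ioc_self ht)
      exact div_nonneg (by linarith [hfg t ht]) (by positivity)) hlim t ht
  rwa [le_div_iff₀ (Real.sqrt_pos.mpr (hg_pos t ht))] at h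

theorem tendsto_mul_div_sq_nhdsGT_zero {f g : ℝ → ℝ} {a b : ℝ} (hf : HasDerivAt f a 0)
    (hg : HasDerivAt g b 0) (hf0 : f 0 = 0) (hg0 : g 0 = 0) :
    Tendsto (fun s => f s * g s / s ^ 2) (𝓝[>] 0) (𝓝 (a * b)) :=
  ((tendsto_div_self_nhdsGT_zero hf hf0).mul (tendsto_div_self_nhdsGT_zero hg hg0)).congr
    fun s => by ring

section Jacobi

variable {κ₁ κ₂ j₁ j₂ j d₁ d₂ d : ℝ → ℝ}

theorem hasDerivAt_shuffleDefect {t : ℝ}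
    (hj₁ : HasDerivAt j₁ (d₁ t) t) (hd₁ : HasDerivAt d₁ (κ₁ t * j₁ t) t)
    (hj₂ : HasDerivAt j₂ (d₂ t) t) (hd₂ : HasDerivAt d₂ (κ₂ t * j₂ t) t)
    (hj : HasDerivAt j (d t) t) (hd : HasDerivAt d ((κ₁ t + κ₂ t) / 2 * j t) t) :
    HasDerivAt (fun s => 2 * (j₁ s * j₂ s) * d s - j s * (d₁ s * j₂ s + j₁ s * d₂ s))
      (d t * (d₁ t * j₂ t + j₁ t * d₂ t) - 2 * j t * (d₁ t * d₂ t)) t := by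
  -- the curvature terms cancel since `d` carries the average of `κ₁` and `κ₂`
  refine ((((hj₁.fun_mul hj₂).const_mul 2).fun_mul hd).fun_sub
    (hj.fun_mul ((hd₁.fun_mul hj₂).fun_add (hj₁.fun_mul hd₂)))).congr_deriv ?_
  ring

theorem shuffleDefect_nonneg {T : ℝ}
    (hj₁ : ∀ t, HasDerivAt j₁ (d₁ t) t) (hd₁ : ∀ t, HasDerivAt d₁ (κ₁ t * j₁ t) t)
    (hj₂ : ∀ t, HasDerivAt j₂ (d₂ t) t) (hd₂ : ∀ t, HasDerivAt d₂ (κ₂ t * j₂ t) t)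
    (hj : ∀ t, HasDerivAt j (d t) t) (hd : ∀ t, HasDerivAt d ((κ₁ t + κ₂ t) / 2 * j t) t)
    (h₁0 : j₁ 0 = 0) (h₂0 : j₂ 0 = 0) (h0 : j 0 = 0) (h₁0' : d₁ 0 = 1) (h₂0' : d₂ 0 = 1)
    (hpos₁ : ∀ t ∈ Ioc 0 T, 0 < j₁ t) (hpos₂ : ∀ t ∈ Ioc 0 T, 0 < j₂ t)
    (hpos : ∀ t ∈ Ioc 0 T, 0 < j t) :
    ∀ t ∈ Ioc 0 T, 0 ≤ 2 * (j₁ t * j₂ t) * d t - j t * (d₁ t * j₂ t + j₁ t * d₂ t) := by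
  have hN t := hasDerivAt_shuffleDefect (hj₁ t) (hd₁ t) (hj₂ t) (hd₂ t) (hj t) (hd t)
  have hN0 := hN 0
  simp only [h₁0, h₂0, h0, mul_zero, zero_mul, add_zero, sub_zero] at hN0
  have hN_mono : ∀ t ∈ Ioo 0 T,
      (2 * (j₁ t * j₂ t) * d t - j t * (d₁ t * j₂ t + j₁ t * d₂ t)) * (d₁ t * j₂ t + j₁ t * d₂ t)
        ≤ 2 * (j₁ t * j₂ t) * (d t * (d₁ t * j₂ t + j₁ t * d₂ t) - 2 * j t * (d₁ t * d₂ t)) := by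
    intro t ht
    have hidentity : 2 * (j₁ t * j₂ t) * (d t * (d₁ t * j₂ t + j₁ t * d₂ t) - 2 * j t * (d₁ t * d₂ t))
        - (2 * (j₁ t * j₂ t) * d t - j t * (d₁ t * j₂ t + j₁ t * d₂ t))
          * (d₁ t * j₂ t + j₁ t * d₂ t) = j t * (d₁ t * j₂ t - j₁ t * d₂ t) ^ 2 := by ring
    have := mul_nonneg (hpos t (Ioo_subset_Ioc_self ht)).le (sq_nonneg (d₁ t * j₂ t - j₁ t * d₂ t))
    linarith
  simpa only [zero_mul] using mul_sqrt_le_of_tendsto (fun t _ => hN t) (fun t _ => (hj₁ t).fun_mul (hj₂ t))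
    (fun t ht => mul_pos (hpos₁ t ht) (hpos₂ t ht)) hN_mono
    (tendsto_div_self_nhdsGT_zero hN0 (by simp [h₁0, h₂0, h0]))
    (mul_one (1 : ℝ) ▸ tendsto_mul_div_sq_nhdsGT_zero (h₁0' ▸ hj₁ 0) (h₂0' ▸ hj₂ 0) h₁0 h₂0)

end Jacobi

theorem multiplicative_lemma_product_general (T : ℝ)
    (κ₁ κ₂ : ℝ → ℝ)
    (j₁ j₂ jav d₁ d₂ dav : ℝ → ℝ)
    (hj₁ : ∀ t, HasDerivAt j₁ (d₁ t) t) (hd₁ : ∀ t, HasDerivAt d₁ (κ₁ t * j₁ t) t)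
    (hj₂ : ∀ t, HasDerivAt j₂ (d₂ t) t) (hd₂ : ∀ t, HasDerivAt d₂ (κ₂ t * j₂ t) t)
    (hjav : ∀ t, HasDerivAt jav (dav t) t)
    (hdav : ∀ t, HasDerivAt dav ((κ₁ t + κ₂ t) / 2 * jav t) t)
    (h₁0 : j₁ 0 = 0) (h₂0 : j₂ 0 = 0) (hav0 : jav 0 = 0)
    (h₁0' : d₁ 0 = 1) (h₂0' : d₂ 0 = 1) (hav0' : dav 0 = 1)
    (hpos₁ : ∀ t ∈ Set.Ioc (0 : ℝ) T, 0 < j₁ t)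
    (hpos₂ : ∀ t ∈ Set.Ioc (0 : ℝ) T, 0 < j₂ t)
    (hposav : ∀ t ∈ Set.Ioc (0 : ℝ) T, 0 < jav t) :
    ∀ t ∈ Set.Icc (0 : ℝ) T, jav t ^ 2 ≥ j₁ t * j₂ t := by
  rintro t ⟨ht0, htT⟩
  rcases ht0.eq_or_lt with rfl | ht0
  · simp [h₁0, hav0]
  have hN := shuffleDefect_nonneg hj₁ hd₁ hj₂ hd₂ hjav hdav h₁0 h₂0 hav0 h₁0' h₂0'
    hpos₁ hpos₂ hposav
  have hsqrt : 1 * √(j₁ t * j₂ t) ≤ jav t :=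
    mul_sqrt_le_of_tendsto (fun t _ => hjav t)
      (fun t _ => (hj₁ t).fun_mul (hj₂ t)) (fun t ht => mul_pos (hpos₁ t ht) (hpos₂ t ht))
      (fun t ht => by linarith [hN t (Ioo_subset_Ioc_self ht)])
      (tendsto_div_self_nhdsGT_zero (hav0' ▸ hjav 0) hav0)
      (mul_one (1 : ℝ) ▸ tendsto_mul_div_sq_nhdsGT_zero (h₁0' ▸ hj₁ 0) (h₂0' ▸ hj₂ 0) h₁0 h₂0)
      t ⟨ht0, htT⟩
  exact (Real.sqrt_le_left (hposav t ⟨ht0, htT⟩).le).mp (by rwa [one_mul] at hsqrt)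

theorem multiplicative_lemma_product (T : ℝ) (hT : 0 < T)
    (κ₁ κ₂ : ℝ → ℝ) (hκ₁ : Continuous κ₁) (hκ₂ : Continuous κ₂)
    (j₁ j₂ jav d₁ d₂ dav : ℝ → ℝ)
    (hj₁ : ∀ t, HasDerivAt j₁ (d₁ t) t) (hd₁ : ∀ t, HasDerivAt d₁ (κ₁ t * j₁ t) t)
    (hj₂ : ∀ t, HasDerivAt j₂ (d₂ t) t) (hd₂ : ∀ t, HasDerivAt d₂ (κ₂ t * j₂ t) t)
    (hjav : ∀ t, HasDerivAt jav (dav t) t)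
    (hdav : ∀ t, HasDerivAt dav ((κ₁ t + κ₂ t) / 2 * jav t) t)
    (h₁0 : j₁ 0 = 0) (h₂0 : j₂ 0 = 0) (hav0 : jav 0 = 0)
    (h₁0' : d₁ 0 = 1) (h₂0' : d₂ 0 = 1) (hav0' : dav 0 = 1)
    (hpos₁ : ∀ t ∈ Set.Ioc (0 : ℝ) T, 0 < j₁ t)
    (hpos₂ : ∀ t ∈ Set.Ioc (0 : ℝ) T, 0 < j₂ t)
    (hposav : ∀ t ∈ Set.Ioc (0 : ℝ) T, 0 < jav t) :
    ∀ t ∈ Set.Icc (0 : ℝ) T, jav t ^ 2 ≥ j₁ t * j₂ t :=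
  multiplicative_lemma_product_general T κ₁ κ₂ j₁ j₂ jav d₁ d₂ dav hj₁ hd₁ hj₂ hd₂ hjav hdav h₁0 h₂0
    hav0 h₁0' h₂0' hav0' hpos₁ hpos₂ hposav
end
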